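/- Let p be an odd prime. There is no left brace B whose additive group is isomorphic to Z/(p) × Z/(p²) and whose socle is trivial, i.e. Soc(B) = {0}. -/

import Mathlib

/-!
Write `A = ZMod p × ZMod (p ^ 2)` and transport `λ : (B, ·) → Aut (B, +)` to `A`. Since
`|B| = p ^ 3`, every `λ_a` has `p`-power order, and such automorphisms of `A` are unitriangular
for the filtration `A ⊃ A[p] ⊃ pA ⊃ 0`: `N = λ_a - 1` satisfies `N ^ 3 = 0` and `p • N = 0`.
Hence `λ_a ^ p = 1`; with trivial socle `λ` is injective, so `a ^ p = 0`, and expanding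
`a ^ p = ∑_{i<p} λ_a ^ i (a)` gives `p • a + (p choose 3) • N ^ 2 a = 0`.

For `p > 3` the second term vanishes, so `p` kills `A`, which is false in `ZMod (p ^ 2)`.
For `p = 3` the relation, read off at any `a` whose `ZMod 9`-coordinate is a unit, determines the
entry `(N (0, 1)).1` from `(N (1, 0)).2`. So `λ` maps these 18 elements injectively into a set of
9 possible `N`.
-/

class LeftBrace (B : Type*) extends AddCommGroup B, Group B where
  left_brace : ∀ a b c : B, a * (b + c) + a = a * b + a * c

namespace LeftBrace

variable {B : Type*} [LeftBrace B]

def socle (B : Type*) [LeftBrace B] : Set B := {a | ∀ b, a * b - a = b}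

theorem mul_add_eq (a b c : B) : a * (b + c) = a * b - a + a * c := by
  linear_combination (norm := abel) left_brace a b c

theorem one_eq_zero : (1 : B) = 0 := by
  simpa using mul_add_eq (1 : B) 0 0

def lam : B →* Module.End ℤ B where
  toFun a := (AddMonoidHom.mk' (fun b => a * b - a) fun b c => by
    rw [mul_add_eq]; abel).toIntLinearMap
  map_one' := by ext b; simp [one_eq_zero]
  map_mul' a b := by
    ext c
    simp only [AddMonoidHom.coe_toIntLinearMap, AddMonoidHom.mk'_apply, Module.End.mul_apply]
    rw [mul_assoc, show a * (b * c) = a * (b * c - b + b) by rw [sub_add_cancel], mul_add_eq]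
    abel

theorem lam_apply (a b : B) : lam a b = a * b - a := rfl

theorem mem_socle_iff {a : B} : a ∈ socle B ↔ lam a = 1 := by
  simp [socle, LinearMap.ext_iff, lam_apply]

theorem lam_injective (h : socle B = {0}) : Function.Injective (lam : B →* Module.End ℤ B) := by
  refine (injective_iff_map_eq_one _).mpr fun a ha => ?_
  rw [one_eq_zero, ← Set.mem_singleton_iff, ← h, mem_socle_iff, ha]

variable {A : Type*} [AddCommGroup A]

def lamConj (e : B ≃+ A) : B →* Module.End ℤ A :=
  e.toIntLinearEquiv.conjRingEquiv.toMonoidHom.comp lam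

theorem lamConj_apply (e : B ≃+ A) (a : B) (v : A) : lamConj e a v = e (lam a (e.symm v)) :=
  rfl

theorem map_mul_eq_add_lamConj (e : B ≃+ A) (a b : B) :
    e (a * b) = e a + lamConj e a (e b) := by
  rw [lamConj_apply, AddEquiv.symm_apply_apply, lam_apply, ← map_add, add_sub_cancel]

theorem map_pow_eq_geom_sum (e : B ≃+ A) (a : B) (n : ℕ) :
    e (a ^ n) = (∑ i ∈ Finset.range n, lamConj e a ^ i) (e a) := by
  induction n with
  | zero => simp [one_eq_zero]
  | succ n ih =>
    rw [pow_succ', map_mul_eq_add_lamConj, ih, geom_sum_succ, LinearMap.add_apply,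
      Module.End.mul_apply, Module.End.one_apply, add_comm]

theorem lamConj_injective (e : B ≃+ A) (h : socle B = {0}) : Function.Injective (lamConj e) :=
  e.toIntLinearEquiv.conjRingEquiv.injective.comp (lam_injective h)

end LeftBrace

theorem nsmul_eq_zero_of_dvd {M : Type*} [AddMonoid M] {x : M} {p k : ℕ} (hk : p ∣ k)
    (hx : p • x = 0) : k • x = 0 :=
  addOrderOf_dvd_iff_nsmul_eq_zero.mp ((addOrderOf_dvd_of_nsmul_eq_zero hx).trans hk)

section Ring

variable {R : Type*} [Ring R] {N : R} {p : ℕ}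

theorem one_add_pow_of_pow_three_eq_zero (hN : N ^ 3 = 0) (n : ℕ) :
    (1 + N) ^ n = 1 + n • N + n.choose 2 • N ^ 2 := by
  induction n with
  | zero => simp
  | succ n ih =>
    have hN' : N ^ 2 * N = 0 := by rw [← pow_succ, hN]
    rw [pow_succ, ih, Nat.choose_succ_succ, Nat.choose_one_right]
    simp only [add_mul, mul_add, one_mul, mul_one, smul_mul_assoc, hN', smul_zero, add_smul,
      one_smul, ← pow_two]
    abel

theorem geom_sum_one_add_of_pow_three_eq_zero (hN : N ^ 3 = 0) (n : ℕ) :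
    ∑ i ∈ Finset.range n, (1 + N) ^ i = n • 1 + n.choose 2 • N + n.choose 3 • N ^ 2 := by
  induction n with
  | zero => simp
  | succ n ih =>
    rw [Finset.sum_range_succ, ih, one_add_pow_of_pow_three_eq_zero hN, Nat.choose_succ_succ,
      Nat.choose_succ_succ, Nat.choose_one_right]
    simp only [add_smul, one_smul]
    abel

theorem one_add_pow_prime_eq_one (hp : p.Prime) (hp2 : p ≠ 2) (hN : N ^ 3 = 0)
    (hpN : p • N = 0) : (1 + N) ^ p = 1 := by
  have h2 : p ∣ p.choose 2 := hp.dvd_choose_self two_ne_zero (lt_of_le_of_ne hp.two_le hp2.symm)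
  rw [one_add_pow_of_pow_three_eq_zero hN, hpN, pow_two, ← smul_mul_assoc,
    nsmul_eq_zero_of_dvd h2 hpN]
  simp

theorem geom_sum_one_add_prime (hp : p.Prime) (hp2 : p ≠ 2) (hN : N ^ 3 = 0)
    (hpN : p • N = 0) : ∑ i ∈ Finset.range p, (1 + N) ^ i = p • 1 + p.choose 3 • N ^ 2 := by
  have h2 : p ∣ p.choose 2 := hp.dvd_choose_self two_ne_zero (lt_of_le_of_ne hp.two_le hp2.symm)
  rw [geom_sum_one_add_of_pow_three_eq_zero hN, nsmul_eq_zero_of_dvd h2 hpN, add_zero]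

theorem choose_three_nsmul_sq_eq_zero (hp : p.Prime) (hp3 : p ≠ 3) (hpN : p • N = 0) :
    p.choose 3 • N ^ 2 = 0 := by
  obtain hlt | hgt := lt_or_gt_of_ne hp3
  · rw [Nat.choose_eq_zero_of_lt hlt, zero_smul]
  · rw [pow_two, ← smul_mul_assoc,
      nsmul_eq_zero_of_dvd (hp.dvd_choose_self three_ne_zero hgt) hpN, zero_mul]

end Ring

section Coordinates

variable {p : ℕ} [hp : Fact p.Prime]

local notation "ρ" => ZMod.castHom (dvd_pow_self p two_ne_zero) (ZMod p)

theorem ZMod.dvd_val_iff_nsmul_eq_zero (y : ZMod (p ^ 2)) : p ∣ y.val ↔ p • y = 0 := by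
  have h := Nat.mul_dvd_mul_iff_left hp.out.pos (b := p) (c := y.val)
  rw [← sq] at h
  rw [← h, ← ZMod.natCast_eq_zero_iff, Nat.cast_mul, ZMod.natCast_val, ZMod.cast_id,
    nsmul_eq_mul]

theorem ZMod.castHom_eq_zero_iff_nsmul_eq_zero (y : ZMod (p ^ 2)) : ρ y = 0 ↔ p • y = 0 := by
  rw [ZMod.castHom_apply, ZMod.cast_eq_val, ZMod.natCast_eq_zero_iff,
    ZMod.dvd_val_iff_nsmul_eq_zero]

theorem ZMod.eq_zero_of_nsmul_eq_zero_of_not_dvd {n : ℕ} {y : ZMod (p ^ 2)} (hn : ¬ p ∣ n)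
    (h : n • y = 0) : y = 0 := by
  rw [nsmul_eq_mul] at h
  exact ((ZMod.isUnit_natCast_iff_not_dvd_pow hp.out two_pos).mpr hn).mul_right_eq_zero.mp h

theorem nsmul_eq_zero_iff_nsmul_snd_eq_zero (v : ZMod p × ZMod (p ^ 2)) :
    p • v = 0 ↔ p • v.2 = 0 := by
  simp [Prod.ext_iff]

theorem nsmul_zero_one_ne_zero : p • ((0, 1) : ZMod p × ZMod (p ^ 2)) ≠ 0 := by
  rw [Ne, nsmul_eq_zero_iff_nsmul_snd_eq_zero, nsmul_eq_mul, mul_one, ZMod.natCast_eq_zero_iff]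
  intro h
  have := Nat.le_of_dvd hp.out.pos h
  nlinarith [hp.out.two_le]

theorem apply_eq_val_nsmul_add (f : Module.End ℤ (ZMod p × ZMod (p ^ 2)))
    (v : ZMod p × ZMod (p ^ 2)) : f v = v.1.val • f (1, 0) + v.2.val • f (0, 1) := by
  rw [← map_nsmul, ← map_nsmul, ← map_add]
  congr 1
  ext <;> simp

theorem endZModProd_ext {f g : Module.End ℤ (ZMod p × ZMod (p ^ 2))}
    (h₁ : f (1, 0) = g (1, 0)) (h₂ : f (0, 1) = g (0, 1)) : f = g :=
  LinearMap.ext fun v => by rw [apply_eq_val_nsmul_add f, apply_eq_val_nsmul_add g, h₁, h₂]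

theorem nsmul_apply_one_zero (f : Module.End ℤ (ZMod p × ZMod (p ^ 2))) : p • f (1, 0) = 0 := by
  rw [← map_nsmul, Prod.smul_mk, smul_zero, Nat.smul_one_eq_cast, ZMod.natCast_self,
    Prod.mk_zero_zero, map_zero]

theorem snd_apply_zero_one_eq_zero_of_apply_eq_zero {T : Module.End ℤ (ZMod p × ZMod (p ^ 2))}
    (hT : T (1, 0) = 0) {v : ZMod p × ZMod (p ^ 2)} (hv : ¬ p ∣ v.2.val) (h : T v = 0) :
    (T (0, 1)).2 = 0 := by
  rw [apply_eq_val_nsmul_add T v, hT, smul_zero, zero_add] at h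
  exact ZMod.eq_zero_of_nsmul_eq_zero_of_not_dvd hv (congrArg Prod.snd h)

theorem castHom_snd_apply (f : Module.End ℤ (ZMod p × ZMod (p ^ 2)))
    (v : ZMod p × ZMod (p ^ 2)) : ρ (f v).2 = ρ (f (0, 1)).2 * ρ v.2 := by
  have h : ρ (f (1, 0)).2 = 0 := by
    rw [ZMod.castHom_eq_zero_iff_nsmul_eq_zero, ← Prod.smul_snd, nsmul_apply_one_zero]; rfl
  rw [apply_eq_val_nsmul_add f v, Prod.snd_add, Prod.smul_snd, Prod.smul_snd, map_add, map_nsmul,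
    map_nsmul, h, smul_zero, zero_add, nsmul_eq_mul, ZMod.natCast_val, mul_comm]
  rfl

theorem castHom_snd_pow_apply (f : Module.End ℤ (ZMod p × ZMod (p ^ 2))) (n : ℕ)
    (v : ZMod p × ZMod (p ^ 2)) : ρ ((f ^ n) v).2 = ρ (f (0, 1)).2 ^ n * ρ v.2 := by
  induction n generalizing v with
  | zero => simp
  | succ n ih =>
    rw [pow_succ f n, Module.End.mul_apply, ih, castHom_snd_apply f v, ← mul_assoc, ← pow_succ]

theorem fst_apply_of_nsmul_eq_zero (f : Module.End ℤ (ZMod p × ZMod (p ^ 2)))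
    {w : ZMod p × ZMod (p ^ 2)} (hw : p • w = 0) : (f w).1 = (f (1, 0)).1 * w.1 := by
  have h : p ∣ w.2.val :=
    (ZMod.dvd_val_iff_nsmul_eq_zero _).mpr ((nsmul_eq_zero_iff_nsmul_snd_eq_zero w).mp hw)
  rw [apply_eq_val_nsmul_add f w, Prod.fst_add, Prod.smul_fst, Prod.smul_fst,
    nsmul_eq_zero_of_dvd h (by simp), add_zero, nsmul_eq_mul, ZMod.natCast_zmod_val, mul_comm]

theorem fst_pow_apply_of_nsmul_eq_zero (f : Module.End ℤ (ZMod p × ZMod (p ^ 2))) (n : ℕ)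
    {w : ZMod p × ZMod (p ^ 2)} (hw : p • w = 0) : ((f ^ n) w).1 = (f (1, 0)).1 ^ n * w.1 := by
  induction n generalizing w with
  | zero => simp
  | succ n ih =>
    rw [pow_succ f n, Module.End.mul_apply, ih (by rw [← map_nsmul, hw, map_zero]),
      fst_apply_of_nsmul_eq_zero f hw, ← mul_assoc, ← pow_succ]

/-- `N` lowers the filtration `A ⊃ A[p] ⊃ pA ⊃ 0` of `A = ZMod p × ZMod (p ^ 2)` by one step;
on the generators this says `N (1, 0) ∈ pA` and `N (0, 1) ∈ A[p]`. -/
def IsStrictlyTriangular (N : Module.End ℤ (ZMod p × ZMod (p ^ 2))) : Prop :=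
  (N (1, 0)).1 = 0 ∧ p • (N (0, 1)).2 = 0

theorem isStrictlyTriangular_sub_one_of_pow_eq_one {f : Module.End ℤ (ZMod p × ZMod (p ^ 2))}
    {k : ℕ} (hf : f ^ p ^ k = 1) : IsStrictlyTriangular (f - 1) := by
  constructor
  · have h := fst_pow_apply_of_nsmul_eq_zero f (p ^ k) (w := (1, 0)) (by simp)
    rw [hf, Module.End.one_apply, ZMod.pow_card_pow, mul_one] at h
    simp [← h]
  · have h := castHom_snd_pow_apply f (p ^ k) (0, 1)
    rw [hf, ZMod.pow_card_pow] at h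
    rw [← ZMod.castHom_eq_zero_iff_nsmul_eq_zero]
    simpa [sub_eq_zero] using h.symm

namespace IsStrictlyTriangular

variable {N : Module.End ℤ (ZMod p × ZMod (p ^ 2))} (hN : IsStrictlyTriangular N)
include hN

theorem apply_of_nsmul_eq_zero {w : ZMod p × ZMod (p ^ 2)} (hw : p • w = 0) :
    N w = w.1.val • N (1, 0) := by
  have h : p ∣ w.2.val :=
    (ZMod.dvd_val_iff_nsmul_eq_zero _).mpr ((nsmul_eq_zero_iff_nsmul_snd_eq_zero w).mp hw)
  have hN₂ : p • N (0, 1) = 0 := (nsmul_eq_zero_iff_nsmul_snd_eq_zero _).mpr hN.2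
  rw [apply_eq_val_nsmul_add N w, nsmul_eq_zero_of_dvd h hN₂, add_zero]

theorem nsmul_apply (v : ZMod p × ZMod (p ^ 2)) : p • N v = 0 := by
  have hN₂ : p • N (0, 1) = 0 := (nsmul_eq_zero_iff_nsmul_snd_eq_zero _).mpr hN.2
  rw [apply_eq_val_nsmul_add N v, smul_add, smul_comm, nsmul_apply_one_zero, smul_zero,
    smul_comm, hN₂, smul_zero, add_zero]

theorem nsmul_eq_zero : p • N = 0 :=
  LinearMap.ext hN.nsmul_apply

theorem pow_three_eq_zero : N ^ 3 = 0 := LinearMap.ext fun v => by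
  have h₁ := hN.apply_of_nsmul_eq_zero (hN.nsmul_apply v)
  have h₂ := hN.apply_of_nsmul_eq_zero (hN.nsmul_apply (N v))
  simp only [pow_succ, pow_zero, one_mul, Module.End.mul_apply, LinearMap.zero_apply]
  rw [h₂, h₁]
  simp [hN.1]

theorem sq_apply_one_zero : (N ^ 2) (1, 0) = 0 := by
  rw [sq N, Module.End.mul_apply, hN.apply_of_nsmul_eq_zero (nsmul_apply_one_zero N), hN.1,
    ZMod.val_zero, zero_smul]

theorem sq_apply_zero_one : (N ^ 2) (0, 1) = (N (0, 1)).1.val • N (1, 0) := by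
  rw [sq N, Module.End.mul_apply, hN.apply_of_nsmul_eq_zero (hN.nsmul_apply _)]

theorem nsmul_one_add_nsmul_val_nsmul_eq_zero {k : ℕ} {v : ZMod p × ZMod (p ^ 2)}
    (hv : ¬ p ∣ v.2.val) (h : p • v + k • (N ^ 2) v = 0) :
    p • 1 + k • (N (0, 1)).1.val • (N (1, 0)).2 = 0 := by
  have hT : (p • 1 + k • N ^ 2 : Module.End ℤ _) (1, 0) = 0 := by
    simp [hN.sq_apply_one_zero, Prod.ext_iff]
  have := snd_apply_zero_one_eq_zero_of_apply_eq_zero hT hv (by simpa using h)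
  simpa [hN.sq_apply_zero_one] using this

end IsStrictlyTriangular

end Coordinates

namespace LeftBrace

variable {B : Type*} [LeftBrace B] {A : Type*} [AddCommGroup A] {p : ℕ}

theorem nsmul_add_choose_three_nsmul_sq_apply_eq_zero (e : B ≃+ A) (h : socle B = {0})
    (hp : p.Prime) (hp2 : p ≠ 2) {a : B} (hN : (lamConj e a - 1) ^ 3 = 0)
    (hpN : p • (lamConj e a - 1) = 0) :
    p • e a + p.choose 3 • ((lamConj e a - 1) ^ 2 : Module.End ℤ A) (e a) = 0 := by
  have hΛ : lamConj e a = 1 + (lamConj e a - 1) := (add_sub_cancel _ _).symm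
  have hpow : a ^ p = 1 := lamConj_injective e h <| by
    rw [map_pow, hΛ, one_add_pow_prime_eq_one hp hp2 hN hpN, map_one]
  have := map_pow_eq_geom_sum e a p
  rw [hpow, one_eq_zero, map_zero, hΛ, geom_sum_one_add_prime hp hp2 hN hpN] at this
  simpa using this.symm

theorem isStrictlyTriangular_lamConj_sub_one [Fact p.Prime] (e : B ≃+ ZMod p × ZMod (p ^ 2))
    (a : B) : IsStrictlyTriangular (lamConj e a - 1) := by
  apply isStrictlyTriangular_sub_one_of_pow_eq_one (k := 3)
  have hcard : Nat.card B = p ^ 3 := by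
    rw [Nat.card_congr e.toEquiv, Nat.card_prod, Nat.card_zmod, Nat.card_zmod]; ring
  rw [← map_pow, ← hcard, pow_card_eq_one', map_one]

-- `3 + c b ≡ 0 (mod 9)` forces `b = 3 b'` with `c b' ≡ -1 (mod 3)`, i.e. `c = -b'`.
theorem eq_of_three_nsmul_one_add_val_nsmul_eq_zero {b : ZMod (3 ^ 2)} {c c' : ZMod 3}
    (h : 3 • 1 + c.val • b = 0) (h' : 3 • 1 + c'.val • b = 0) : c = c' := by
  revert b c c'
  decide

theorem not_injective_lamConj_of_three (e : B ≃+ ZMod 3 × ZMod (3 ^ 2))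
    (h : ∀ a, 3 • e a + ((lamConj e a - 1) ^ 2 : Module.End ℤ _) (e a) = 0) :
    ¬ Function.Injective (lamConj e) := by
  intro hinj
  have hN a := isStrictlyTriangular_lamConj_sub_one e a
  let F : {v : ZMod 3 × ZMod (3 ^ 2) // ¬ 3 ∣ v.2.val} →
      {w : ZMod (3 ^ 2) × ZMod (3 ^ 2) // 3 • w = 0} := fun v =>
    ⟨(((lamConj e (e.symm v) - 1) (1, 0)).2, ((lamConj e (e.symm v) - 1) (0, 1)).2), by
      have hb := (nsmul_eq_zero_iff_nsmul_snd_eq_zero _).mp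
        (nsmul_apply_one_zero (lamConj e (e.symm v) - 1))
      exact Prod.ext hb (hN _).2⟩
  have hF : Function.Injective F := by
    rintro ⟨v, hv⟩ ⟨v', hv'⟩ hvv'
    simp only [F, Subtype.mk.injEq, Prod.mk.injEq] at hvv'
    obtain ⟨hb, hδ⟩ := hvv'
    have hc := (hN (e.symm v)).nsmul_one_add_nsmul_val_nsmul_eq_zero (k := 1) (by simpa using hv)
      (by simpa using h (e.symm v))
    have hc' := (hN (e.symm v')).nsmul_one_add_nsmul_val_nsmul_eq_zero (k := 1)
      (by simpa using hv')
      (by simpa using h (e.symm v'))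
    rw [one_smul, ← hb] at hc'
    rw [one_smul] at hc
    have hγ := eq_of_three_nsmul_one_add_val_nsmul_eq_zero hc hc'
    have hN_eq : lamConj e (e.symm v) - 1 = lamConj e (e.symm v') - 1 :=
      endZModProd_ext (Prod.ext ((hN _).1.trans (hN _).1.symm) hb) (Prod.ext hγ hδ)
    exact Subtype.ext (e.symm.injective (hinj (sub_left_injective hN_eq)))
  exact absurd (Fintype.card_le_of_injective F hF) (by decide)

end LeftBrace

open LeftBrace in
/-- For odd primes `p`, there is no left brace with additive group isomorphic to
`Z/(p) × Z/(p²)` whose socle `{a | λ_a = id}` is trivial. -/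
theorem no_trivial_socle_brace_p_times_p_squared (p : ℕ) (hp : p.Prime) (hodd : p ≠ 2) :
    ∀ (B : Type*) [LeftBrace B], (B ≃+ ZMod p × ZMod (p ^ 2)) →
      ¬({a : B | ∀ b : B, a * b - a = b} = {0}) := by
  intro B _ e hsoc
  have := Fact.mk hp
  have hN := isStrictlyTriangular_lamConj_sub_one e
  have key a := nsmul_add_choose_three_nsmul_sq_apply_eq_zero e hsoc hp hodd
    (hN a).pow_three_eq_zero (hN a).nsmul_eq_zero
  obtain rfl | hp3 := eq_or_ne p 3
  · exact not_injective_lamConj_of_three e (by simpa using key) (lamConj_injective e hsoc)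
  · have h := key (e.symm (0, 1))
    rw [← LinearMap.smul_apply, choose_three_nsmul_sq_eq_zero hp hp3 (hN _).nsmul_eq_zero,
      LinearMap.zero_apply, add_zero, AddEquiv.apply_symm_apply] at h
    exact nsmul_zero_one_ne_zero h
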